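/- Let k be a power of 3, n ≥ 1, and f a non-increasing convex probability density on {1,…,k}. For an integer j ≥ 0, let L_j be the set of leaves of the idealized ternary tree T†(f) at depth j, and let q_j = Σ_{u∈L_j} f_{I_u}. Then |L_j| ≤ 3 + 11 (n q_j)^{1/5}. -/
import Mathlib


open Finset

/-- For `k = 3^m`, the node at depth `j` and position `i` (for `i < 3^j`) of the
complete ternary tree of triadic subintervals of `{1, …, 3^m}` covers the interval
`I_{j,i} = {i · 3^{m-j} + 1, …, (i+1) · 3^{m-j}}`. -/
def nodeInterval3 (m j i : ℕ) : Finset ℕ :=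
  Finset.Icc (i * 3 ^ (m - j) + 1) ((i + 1) * 3 ^ (m - j))

/-- `f_{I_{j,i}} = ∑_{x ∈ I_{j,i}} f x`, the mass of `f` on the interval of node `(j, i)`. -/
noncomputable def blockSum3 (f : ℕ → ℝ) (m j i : ℕ) : ℝ :=
  ∑ x ∈ nodeInterval3 m j i, f x

/-- The idealized ternary splitting rule: the node `(j, i)` splits iff its interval
has more than one point (i.e. `j < m`) and, with `I_v`, `I_w`, `I_r` the three equal
consecutive thirds of its interval from left to right,
`f_{I_v} - 2 f_{I_w} + f_{I_r} > √((f_{I_v} + f_{I_w} + f_{I_r})/n)`. -/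
def Splits3 (f : ℕ → ℝ) (n m j i : ℕ) : Prop :=
  j < m ∧
    blockSum3 f m (j + 1) (3 * i) - 2 * blockSum3 f m (j + 1) (3 * i + 1) +
        blockSum3 f m (j + 1) (3 * i + 2) >
      Real.sqrt ((blockSum3 f m (j + 1) (3 * i) + blockSum3 f m (j + 1) (3 * i + 1) +
        blockSum3 f m (j + 1) (3 * i + 2)) / n)

/-- Membership of the node `(j, i)` in the idealized ternary tree `T†(f)`: the root
`(0, 0)` is in the tree, and a node is in the tree iff its parent is in the tree and
splits. -/
def InTree3 (f : ℕ → ℝ) (n m : ℕ) : ℕ → ℕ → Prop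
  | 0, i => i = 0
  | j + 1, i => InTree3 f n m j (i / 3) ∧ Splits3 f n m j (i / 3)

/-- The node `(j, i)` is a leaf of the idealized ternary tree `T†(f)`: it belongs to
the tree and does not split. -/
def IsLeaf3 (f : ℕ → ℝ) (n m j i : ℕ) : Prop :=
  InTree3 f n m j i ∧ ¬ Splits3 f n m j i

namespace S17


lemma sum_Icc_shift (f : ℕ → ℝ) (a b t : ℕ) :
    ∑ x ∈ Icc (a + t) (b + t), f x = ∑ x ∈ Icc a b, f (x + t) := by
  rw [← Finset.map_add_right_Icc, Finset.sum_map]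
  rfl

section F
variable (f : ℕ → ℝ) (M : ℕ)
variable (hmono : ∀ x, 1 ≤ x → x + 1 ≤ M → f (x + 1) ≤ f x)
variable (hconv : ∀ x, 1 ≤ x → x + 2 ≤ M → 0 ≤ f x - 2 * f (x + 1) + f (x + 2))

include hmono in
lemma fmono_t : ∀ t x, 1 ≤ x → x + t ≤ M → f (x + t) ≤ f x := by
  intro t
  induction t with
  | zero => intro x _ _; simp
  | succ t ih =>
    intro x hx hxt
    calc f (x + (t+1)) = f ((x + t) + 1) := by ring_nf
    _ ≤ f (x + t) := hmono _ (by omega) (by omega)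
    _ ≤ f x := ih x hx (by omega)

include hconv in
lemma gmono_t : ∀ t y, 1 ≤ y → y + t + 1 ≤ M →
    f (y + t) - f (y + t + 1) ≤ f y - f (y + 1) := by
  intro t
  induction t with
  | zero => intro y _ _; simp
  | succ t ih =>
    intro y hy hyt
    have h1 := hconv (y + t) (by omega) (by omega)
    have h2 := ih y hy (by omega)
    have e1 : y + (t+1) = y + t + 1 := by ring
    have e2 : y + t + 1 + 1 = y + t + 2 := by ring
    rw [e1, e2]
    have e3 : f (y+t+2) = f (y + t + 2) := rfl
    nlinarith [h1, h2]

lemma tele (y : ℕ) : ∀ t, ∑ a ∈ range t, (f (y + a) - f (y + a + 1)) = f y - f (y + t) := by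
  intro t
  induction t with
  | zero => simp
  | succ t ih => rw [Finset.sum_range_succ, ih]; ring_nf

include hconv in
lemma fconv_t : ∀ t x, 1 ≤ x → x + t + t ≤ M → 0 ≤ f x - 2 * f (x + t) + f (x + t + t) := by
  intro t x hx hxt
  have key : 0 ≤ ∑ a ∈ range t, ((f (x + a) - f (x + a + 1)) - (f ((x + t) + a) - f ((x + t) + a + 1))) := by
    apply Finset.sum_nonneg
    intro a ha
    have ha' : a < t := Finset.mem_range.1 ha
    have := gmono_t f M hconv t (x + a) (by omega) (by omega)
    rw [show x + a + t = x + t + a from by omega] at this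
    linarith
  rw [Finset.sum_sub_distrib, tele, tele] at key
  have e : x + t + t = x + t + t := rfl
  linarith

end F

section Block
variable (f : ℕ → ℝ) (m : ℕ)
variable (hf0 : ∀ x, 0 ≤ f x)
variable (hmono : ∀ x, 1 ≤ x → x + 1 ≤ 3 ^ m → f (x + 1) ≤ f x)
variable (hconv : ∀ x, 1 ≤ x → x + 2 ≤ 3 ^ m → 0 ≤ f x - 2 * f (x + 1) + f (x + 2))

include hf0 in
lemma blockSum3_nonneg (j i : ℕ) : 0 ≤ blockSum3 f m j i :=
  Finset.sum_nonneg fun x _ => hf0 x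

lemma blockSum3_shift (j i s : ℕ) :
    blockSum3 f m j (i + s) = ∑ x ∈ nodeInterval3 m j i, f (x + s * 3 ^ (m - j)) := by
  unfold blockSum3 nodeInterval3
  rw [show (i + s) * 3 ^ (m - j) + 1 = (i * 3 ^ (m - j) + 1) + s * 3 ^ (m - j) from by ring,
    show (i + s + 1) * 3 ^ (m - j) = (i + 1) * 3 ^ (m - j) + s * 3 ^ (m - j) from by ring]
  exact sum_Icc_shift f _ _ _

lemma pow_mul_pow (j : ℕ) (hjm : j ≤ m) : 3 ^ (m - j) * 3 ^ j = 3 ^ m := by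
  rw [← pow_add]; congr 1; omega

variable {f m}

lemma mem_block {j i x : ℕ} (hjm : j ≤ m) (hx : x ∈ nodeInterval3 m j i) :
    1 ≤ x ∧ i * 3 ^ (m - j) + 1 ≤ x ∧ x ≤ (i + 1) * 3 ^ (m - j) := by
  rw [nodeInterval3, Finset.mem_Icc] at hx
  omega

include hmono in
lemma block_mono {j i : ℕ} (hjm : j ≤ m) (hi : i + 1 < 3 ^ j) :
    blockSum3 f m j (i + 1) ≤ blockSum3 f m j i := by
  rw [blockSum3_shift f m j i 1, blockSum3]
  apply Finset.sum_le_sum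
  intro x hx
  obtain ⟨hx1, -, hx2⟩ := mem_block hjm hx
  have hp := pow_mul_pow m j hjm
  have hle : (i + 2) * 3 ^ (m - j) ≤ 3 ^ m := by
    calc (i + 2) * 3 ^ (m - j) ≤ 3 ^ j * 3 ^ (m - j) := by
          apply Nat.mul_le_mul_right; omega
    _ = 3 ^ m := by rw [Nat.mul_comm]; exact hp
  have : x + 1 * 3 ^ (m - j) ≤ 3 ^ m := by
    have : x + 1 * 3 ^ (m - j) ≤ (i + 2) * 3 ^ (m - j) := by nlinarith [hx2]
    omega
  exact fmono_t f (3 ^ m) hmono (1 * 3 ^ (m - j)) x hx1 this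

include hconv in
lemma block_conv {j i : ℕ} (hjm : j ≤ m) (hi : i + 2 < 3 ^ j) :
    blockSum3 f m j (i + 1) - blockSum3 f m j (i + 2) ≤
      blockSum3 f m j i - blockSum3 f m j (i + 1) := by
  have h1 := blockSum3_shift f m j i 1
  have h2 := blockSum3_shift f m j i 2
  have key : 0 ≤ ∑ x ∈ nodeInterval3 m j i,
      (f x - 2 * f (x + 1 * 3 ^ (m - j)) + f (x + 2 * 3 ^ (m - j))) := by
    apply Finset.sum_nonneg
    intro x hx
    obtain ⟨hx1, -, hx2⟩ := mem_block hjm hx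
    have hp := pow_mul_pow m j hjm
    have hle : (i + 3) * 3 ^ (m - j) ≤ 3 ^ m := by
      calc (i + 3) * 3 ^ (m - j) ≤ 3 ^ j * 3 ^ (m - j) := by
            apply Nat.mul_le_mul_right; omega
      _ = 3 ^ m := by rw [Nat.mul_comm]; exact hp
    have hb : x + 3 ^ (m - j) + 3 ^ (m - j) ≤ 3 ^ m := by nlinarith [hx2]
    have := fconv_t f (3 ^ m) hconv (3 ^ (m - j)) x hx1 hb
    rw [show x + 1 * 3 ^ (m - j) = x + 3 ^ (m - j) from by ring,
      show x + 2 * 3 ^ (m - j) = x + 3 ^ (m - j) + 3 ^ (m - j) from by ring]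
    linarith
  rw [Finset.sum_add_distrib, Finset.sum_sub_distrib, ← Finset.mul_sum] at key
  rw [h1, h2, blockSum3]
  linarith

end Block

set_option maxHeartbeats 4000000

noncomputable def lam : ℝ := 1215 / 161051
noncomputable def nu : ℝ := 1 / 40

structure Setup (n K : ℕ) (S : ℕ → ℝ) (Split : ℕ → Prop) : Prop where
  hn : 1 ≤ n
  hS0 : ∀ i, 0 ≤ S i
  hmono : ∀ i, i + 1 < K → S (i + 1) ≤ S i
  hconv : ∀ i, i + 2 < K → S (i + 1) - S (i + 2) ≤ S i - S (i + 1)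
  hsplit : ∀ p, Split p → 3 * p + 2 < K ∧
    Real.sqrt ((S (3 * p) + S (3 * p + 1) + S (3 * p + 2)) / n) <
      S (3 * p) - 2 * S (3 * p + 1) + S (3 * p + 2)

namespace Setup

variable {n K : ℕ} {S : ℕ → ℝ} {Split : ℕ → Prop} (hs : Setup n K S Split)

include hs

lemma smono : ∀ i i', i ≤ i' → i' < K → S i' ≤ S i := by
  intro i i' hii
  induction i' , hii using Nat.le_induction with
  | base => intro _; exact le_refl _
  | succ i' hii ih =>
    intro hK
    exact le_trans (hs.hmono i' hK) (ih (by omega))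

lemma dmono : ∀ i i', i ≤ i' → i' + 2 ≤ K → S i' - S (i' + 1) ≤ S i - S (i + 1) := by
  intro i i' hii
  induction i' , hii using Nat.le_induction with
  | base => intro _; exact le_refl _
  | succ i' hii ih =>
    intro hK
    exact le_trans (hs.hconv i' (by omega)) (ih (by omega))

lemma core : ∀ Q : Finset ℕ, (∀ p ∈ Q, Split p) → ∀ p ∈ Q, (∀ r ∈ Q, p ≤ r) →
    (1 ≤ (n : ℝ) * S (3 * p) ∧ lam * (Q.card : ℝ) ^ 4 ≤ (n : ℝ) * S (3 * p)) ∧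
    ((Q.card : ℝ) ≤ (n : ℝ) * (S (3 * p) - S (3 * p + 1)) ∧
      nu * (Q.card : ℝ) ^ 3 ≤ (n : ℝ) * (S (3 * p) - S (3 * p + 1))) := by
  intro Q
  induction Q using Finset.strongInduction with
  | _ Q ih =>
  intro hQ p hp hmin
  have hnR : (1 : ℝ) ≤ (n : ℝ) := by exact_mod_cast hs.hn
  have hnpos : (0 : ℝ) < n := by linarith
  obtain ⟨h32, hd⟩ := hs.hsplit p (hQ p hp)
  set A := S (3 * p) with hA
  set B := S (3 * p + 1) with hB
  set C := S (3 * p + 2) with hC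
  have hB0 : 0 ≤ B := hs.hS0 _
  have hC0 : 0 ≤ C := hs.hS0 _
  have hCB : C ≤ B := hs.hmono (3 * p + 1) (by omega)
  have hBA : B ≤ A := hs.hmono (3 * p) (by omega)
  set d := A - 2 * B + C with hdd
  set P := A + B + C with hP
  have hPA : A ≤ P := by simp [hP]; linarith
  have hd0 : 0 < d := lt_of_le_of_lt (Real.sqrt_nonneg _) hd
  have hdA : d ≤ A := by simp [hdd]; linarith
  have hdDA : d ≤ A - B := by simp [hdd]; linarith
  -- sqrt(A/n) ≤ d
  have hsA : Real.sqrt (A / n) ≤ d := by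
    refine le_of_lt (lt_of_le_of_lt (Real.sqrt_le_sqrt ?_) hd)
    gcongr
  have hA0 : 0 < A := lt_of_lt_of_le hd0 hdA
  -- 1 ≤ n * A
  have h1nA : 1 ≤ (n : ℝ) * A := by
    have h' : Real.sqrt (A / n) ≤ A := le_trans hsA hdA
    have hAn0 : 0 ≤ A / n := by positivity
    have h2 : A / n ≤ A ^ 2 := by
      have := mul_self_le_mul_self (Real.sqrt_nonneg (A / n)) h'
      rw [Real.mul_self_sqrt hAn0] at this
      nlinarith [this]
    have h3 : A ≤ A ^ 2 * n := (div_le_iff₀ hnpos).mp h2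
    nlinarith [h3, hA0, hnpos]
  -- sqrt (n*A) ≤ n * d
  have hsnA : Real.sqrt ((n : ℝ) * A) ≤ (n : ℝ) * d := by
    have he : Real.sqrt ((n : ℝ) * A) = (n : ℝ) * Real.sqrt (A / n) := by
      rw [show (n : ℝ) * Real.sqrt (A / n) = Real.sqrt ((n : ℝ) ^ 2) * Real.sqrt (A / n) from by
            rw [Real.sqrt_sq (le_of_lt hnpos)],
          ← Real.sqrt_mul (by positivity)]
      congr 1
      field_simp
    rw [he]
    exact mul_le_mul_of_nonneg_left hsA (le_of_lt hnpos)
  have h1snA : 1 ≤ Real.sqrt ((n : ℝ) * A) := by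
    rw [show (1 : ℝ) = Real.sqrt 1 from (Real.sqrt_one).symm]
    exact Real.sqrt_le_sqrt h1nA
  have hlam : lam = 1215 / 161051 := rfl
  have hnu : nu = (1 : ℝ) / 40 := rfl
  by_cases hQ' : Q.erase p = ∅
  · -- base case : Q = {p}
    have hcard : Q.card = 1 := by
      have := Finset.card_erase_add_one hp
      rw [hQ'] at this
      simpa using this.symm
    rw [hcard]
    have hnd : (n : ℝ) * d ≤ (n : ℝ) * (A - B) := mul_le_mul_of_nonneg_left hdDA (le_of_lt hnpos)
    have h1 : 1 ≤ (n : ℝ) * (A - B) := le_trans h1snA (le_trans hsnA hnd)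
    refine ⟨⟨h1nA, ?_⟩, ?_, ?_⟩
    · rw [hlam]; norm_num; linarith
    · norm_num; exact h1
    · rw [hnu]; norm_num; linarith
  · -- inductive step
    have hQ'ne : (Q.erase p).Nonempty := Finset.nonempty_iff_ne_empty.mpr hQ'
    set p' := (Q.erase p).min' hQ'ne with hp'def
    have hp'mem : p' ∈ Q.erase p := Finset.min'_mem _ _
    have hp'Q : p' ∈ Q := Finset.mem_of_mem_erase hp'mem
    have hpp' : p + 1 ≤ p' := by
      have h1 := hmin p' hp'Q
      have h2 : p' ≠ p := Finset.ne_of_mem_erase hp'mem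
      omega
    have hIH := ih (Q.erase p) (Finset.erase_ssubset hp)
      (fun r hr => hQ r (Finset.mem_of_mem_erase hr)) p' hp'mem
      (fun r hr => Finset.min'_le _ _ hr)
    obtain ⟨⟨hih1, hih2⟩, hih3, hih4⟩ := hIH
    obtain ⟨h32', -⟩ := hs.hsplit p' (hQ p' hp'Q)
    set u : ℕ := (Q.erase p).card with hu
    have hcard : Q.card = u + 1 := by rw [hu, Finset.card_erase_add_one hp]
    have hu1 : 1 ≤ u := Finset.card_pos.mpr hQ'ne
    have hu0R : (1:ℝ) ≤ (u:ℝ) := by exact_mod_cast hu1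
    -- chains
    have hD1 : S (3*p') - S (3*p'+1) ≤ S (3*p+1) - S (3*p+2) :=
      hs.dmono (3*p+1) (3*p') (by omega) (by omega)
    have hD2 : S (3*p') - S (3*p'+1) ≤ S (3*p+2) - S (3*p+3) :=
      hs.dmono (3*p+2) (3*p') (by omega) (by omega)
    have hS3 : S (3*p') ≤ S (3*p+3) := hs.smono (3*p+3) (3*p') (by omega) (by omega)
    set D' := S (3*p') - S (3*p'+1) with hD'
    set A' := S (3*p') with hA'
    have hchainA : d + 3 * D' + A' ≤ A := by
      have hid : A = d + 2 * (S (3*p+1) - S (3*p+2)) + (S (3*p+2) - S (3*p+3)) + S (3*p+3) := by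
        simp only [hdd, hA, hB, hC]; ring
      rw [hid]
      linarith [hD1, hD2, hS3]
    have hchainD : d + D' ≤ A - B := by
      have hid : A - B = d + (S (3*p+1) - S (3*p+2)) := by
        simp only [hdd, hA, hB, hC]; ring
      rw [hid]
      linarith [hD1]
    -- multiplied versions
    have hnA : (n:ℝ) * d + 3 * ((n:ℝ) * D') + (n:ℝ) * A' ≤ (n:ℝ) * A := by
      have h := mul_le_mul_of_nonneg_left hchainA (le_of_lt hnpos)
      calc (n:ℝ) * d + 3 * ((n:ℝ) * D') + (n:ℝ) * A' = (n:ℝ) * (d + 3 * D' + A') := by ring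
      _ ≤ (n:ℝ) * A := h
    have hnDA : (n:ℝ) * d + (n:ℝ) * D' ≤ (n:ℝ) * (A - B) := by
      have h := mul_le_mul_of_nonneg_left hchainD (le_of_lt hnpos)
      calc (n:ℝ) * d + (n:ℝ) * D' = (n:ℝ) * (d + D') := by ring
      _ ≤ (n:ℝ) * (A - B) := h
    have hnd0 : 0 ≤ (n:ℝ) * d := by positivity
    have hnD'0 : 0 ≤ (n:ℝ) * D' := by
      have h0u : (0:ℝ) ≤ (u:ℝ) := by positivity
      linarith [hih3]
    have hndsnA : Real.sqrt ((n:ℝ) * A) ≤ (n:ℝ) * d := hsnA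
    have hcastu : ((Q.card : ℝ)) = (u : ℝ) + 1 := by rw [hcard]; push_cast; ring
    -- Goal A : lam * card^4 ≤ n * A
    have hGA : lam * ((u:ℝ)+1)^4 ≤ (n:ℝ) * A := by
      rcases le_or_gt ((u:ℝ)+1) 3 with hc | hc
      · have h4 : ((u:ℝ)+1)^4 ≤ 81 := by
          calc ((u:ℝ)+1)^4 ≤ 3^4 := pow_le_pow_left₀ (by positivity) hc 4
          _ = 81 := by norm_num
        have h' : lam * ((u:ℝ)+1)^4 ≤ 1 := by
          rw [hlam]
          nlinarith [h4]
        linarith [h', h1nA]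
      · have hu3 : (3:ℝ) ≤ (u:ℝ) := by
          have : (2:ℝ) < (u:ℝ) := by linarith
          have : 2 < u := by exact_mod_cast this
          exact_mod_cast this
        have harith : lam * ((u:ℝ)+1)^4 ≤ 3 * (nu * (u:ℝ)^3) + lam * (u:ℝ)^4 := by
          rw [hlam, hnu]
          nlinarith [hu3, sq_nonneg ((u:ℝ) - 3), sq_nonneg (u:ℝ)]
        calc lam * ((u:ℝ)+1)^4 ≤ 3 * (nu * (u:ℝ)^3) + lam * (u:ℝ)^4 := harith
        _ ≤ 3 * ((n:ℝ) * D') + (n:ℝ) * A' := by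
            linarith [hih4, hih2]
        _ ≤ (n:ℝ) * A := by linarith [hnA, hnd0]
    -- Goal B : card ≤ n (A - B)
    have hGB : (u:ℝ) + 1 ≤ (n:ℝ) * (A - B) := by
      have h1 : (1:ℝ) ≤ (n:ℝ) * d := le_trans h1snA hsnA
      have h2 : (u:ℝ) ≤ (n:ℝ) * D' := hih3
      linarith [hnDA]
    -- Goal C : nu * card^3 ≤ n (A - B)
    have hGC : nu * ((u:ℝ)+1)^3 ≤ (n:ℝ) * (A - B) := by
      rcases le_or_gt ((u:ℝ)+1) 6 with hc | hc
      · have h3 : ((u:ℝ)+1)^2 ≤ 36 := by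
          calc ((u:ℝ)+1)^2 ≤ 6^2 := pow_le_pow_left₀ (by positivity) hc 2
          _ = 36 := by norm_num
        have h' : nu * ((u:ℝ)+1)^3 ≤ (u:ℝ)+1 := by
          rw [hnu]
          nlinarith [h3, hu0R]
        linarith [h', hGB]
      · have hu3 : (3:ℝ) ≤ (u:ℝ) := by linarith
        have hsq : (3/40) * ((u:ℝ)+1)^2 ≤ Real.sqrt ((n:ℝ) * A) := by
          rw [show (3/40) * ((u:ℝ)+1)^2 = Real.sqrt (((3/40) * ((u:ℝ)+1)^2)^2) from
            (Real.sqrt_sq (by positivity)).symm]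
          apply Real.sqrt_le_sqrt
          calc ((3/40) * ((u:ℝ)+1)^2)^2 = (9/1600) * ((u:ℝ)+1)^4 := by ring
          _ ≤ lam * ((u:ℝ)+1)^4 := by rw [hlam]; nlinarith [pow_nonneg (by positivity : (0:ℝ) ≤ (u:ℝ)+1) 4]
          _ ≤ (n:ℝ) * A := hGA
        have h2 : nu * (u:ℝ)^3 ≤ (n:ℝ) * D' := hih4
        have harith : nu * ((u:ℝ)+1)^3 ≤ (3/40) * ((u:ℝ)+1)^2 + nu * (u:ℝ)^3 := by
          rw [hnu]
          nlinarith [hu0R]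
        calc nu * ((u:ℝ)+1)^3 ≤ (3/40) * ((u:ℝ)+1)^2 + nu * (u:ℝ)^3 := harith
        _ ≤ (n:ℝ) * d + (n:ℝ) * D' := add_le_add (le_trans hsq hsnA) h2
        _ ≤ (n:ℝ) * (A - B) := hnDA
    rw [hcastu]
    exact ⟨⟨h1nA, hGA⟩, hGB, hGC⟩


lemma sumLB : ∀ Q : Finset ℕ, (∀ p ∈ Q, Split p) →
    lam * ∑ u ∈ Finset.range Q.card, (u : ℝ) ^ 4 ≤ ∑ p ∈ Q, (n : ℝ) * S (3 * p + 2) := by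
  intro Q
  induction Q using Finset.strongInduction with
  | _ Q ih =>
  intro hQ
  rcases Finset.eq_empty_or_nonempty Q with rfl | hne
  · simp
  · set p := Q.min' hne with hpdef
    have hp : p ∈ Q := Finset.min'_mem _ _
    have hdecomp : (n : ℝ) * S (3 * p + 2) + ∑ x ∈ Q.erase p, (n : ℝ) * S (3 * x + 2) =
        ∑ x ∈ Q, (n : ℝ) * S (3 * x + 2) := Finset.add_sum_erase Q (fun p => (n : ℝ) * S (3 * p + 2)) hp
    set u : ℕ := (Q.erase p).card with hu
    have hcard : Q.card = u + 1 := by rw [hu, Finset.card_erase_add_one hp]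
    have hIH := ih (Q.erase p) (Finset.erase_ssubset hp)
      (fun r hr => hQ r (Finset.mem_of_mem_erase hr))
    have hkey : lam * (u : ℝ) ^ 4 ≤ (n : ℝ) * S (3 * p + 2) := by
      rcases Finset.eq_empty_or_nonempty (Q.erase p) with he | hne'
      · have : u = 0 := by rw [hu, he]; simp
        rw [this]
        have : (0:ℝ) ≤ (n : ℝ) * S (3 * p + 2) := by
          have := hs.hS0 (3 * p + 2)
          positivity
        simpa using this
      · set p' := (Q.erase p).min' hne' with hp'def
        have hp'mem : p' ∈ Q.erase p := Finset.min'_mem _ _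
        have hcore := (hs.core (Q.erase p)
          (fun r hr => hQ r (Finset.mem_of_mem_erase hr)) p' hp'mem
          (fun r hr => Finset.min'_le _ _ hr)).1.2
        obtain ⟨h32', -⟩ := hs.hsplit p' (hQ p' (Finset.mem_of_mem_erase hp'mem))
        have hpp' : p + 1 ≤ p' := by
          have h1 := Finset.min'_le Q p' (Finset.mem_of_mem_erase hp'mem)
          have h2 : p' ≠ p := Finset.ne_of_mem_erase hp'mem
          omega
        have hmono' : S (3 * p') ≤ S (3 * p + 2) :=
          hs.smono (3 * p + 2) (3 * p') (by omega) (by omega)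
        have hnpos : (0:ℝ) < (n:ℝ) := by
          have := hs.hn; exact_mod_cast Nat.lt_of_lt_of_le Nat.zero_lt_one this
        calc lam * (u : ℝ) ^ 4 ≤ (n : ℝ) * S (3 * p') := hcore
        _ ≤ (n : ℝ) * S (3 * p + 2) := mul_le_mul_of_nonneg_left hmono' (le_of_lt hnpos)
    rw [← hu] at hIH
    rw [hcard, Finset.sum_range_succ, ← hdecomp]
    calc lam * (∑ x ∈ Finset.range u, (x:ℝ) ^ 4 + (u:ℝ) ^ 4)
        = lam * ∑ x ∈ Finset.range u, (x:ℝ) ^ 4 + lam * (u:ℝ) ^ 4 := by ring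
    _ ≤ (∑ x ∈ Q.erase p, (n : ℝ) * S (3 * x + 2)) + (n : ℝ) * S (3 * p + 2) :=
        add_le_add hIH hkey
    _ = (n : ℝ) * S (3 * p + 2) + ∑ x ∈ Q.erase p, (n : ℝ) * S (3 * x + 2) := by ring

end Setup

lemma inTree3_lt (f : ℕ → ℝ) (n m : ℕ) : ∀ j i, InTree3 f n m j i → i < 3 ^ j := by
  intro j
  induction j with
  | zero => intro i h; rw [InTree3] at h; omega
  | succ j ihj =>
    intro i h
    rw [InTree3] at h
    have := ihj (i / 3) h.1
    have h3 : i < 3 ^ j * 3 := (Nat.div_lt_iff_lt_mul (by norm_num)).mp this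
    calc i < 3 ^ j * 3 := h3
    _ = 3 ^ (j + 1) := by rw [pow_succ]

lemma sum_pow4 : ∀ N : ℕ, (N : ℝ) ^ 5 ≤ 5 * ∑ u ∈ Finset.range (N + 1), (u : ℝ) ^ 4 := by
  intro N
  induction N with
  | zero => simp
  | succ N ih =>
    rw [Finset.sum_range_succ, mul_add]
    push_cast
    nlinarith [ih, pow_nonneg (Nat.cast_nonneg (α := ℝ) N) 3, pow_nonneg (Nat.cast_nonneg (α := ℝ) N) 2, Nat.cast_nonneg (α := ℝ) N]

end S17

set_option maxHeartbeats 1000000 in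
/-- For `k = 3^m` a power of three, `n ≥ 1`, and `f` a non-increasing convex
probability density on `{1, …, k}`, if `L_j` is the set of leaves of the idealized
ternary tree `T†(f)` at depth `j` and `q_j` is the total probability mass of `f` on
those leaves, then `|L_j| ≤ 3 + 11 (n q_j)^{1/5}`. -/
theorem stmt17 (m n : ℕ) (hn : 1 ≤ n) (f : ℕ → ℝ)
    (hf0 : ∀ x, 0 ≤ f x)
    (hf1 : ∑ x ∈ Finset.Icc 1 (3 ^ m), f x = 1)
    (hmono : ∀ x, 1 ≤ x → x + 1 ≤ 3 ^ m → f (x + 1) ≤ f x)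
    (hconv : ∀ x, 1 ≤ x → x + 2 ≤ 3 ^ m → 0 ≤ f x - 2 * f (x + 1) + f (x + 2))
    (j : ℕ)
    (Lj : Finset ℕ) (hLj : ∀ i, i ∈ Lj ↔ IsLeaf3 f n m j i)
    (qj : ℝ) (hqj : qj = ∑ i ∈ Lj, blockSum3 f m j i) :
    (Lj.card : ℝ) ≤ 3 + 11 * ((n : ℝ) * qj) ^ ((1 : ℝ) / 5) := by
  classical
  have hq0 : 0 ≤ qj := by
    rw [hqj]
    exact Finset.sum_nonneg fun i _ => S17.blockSum3_nonneg f m hf0 j i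
  have hnq0 : 0 ≤ (n : ℝ) * qj := by positivity
  have hrpow0 : 0 ≤ ((n : ℝ) * qj) ^ ((1 : ℝ) / 5) := Real.rpow_nonneg hnq0 _
  rcases Finset.eq_empty_or_nonempty Lj with rfl | hLne
  · simp
    positivity
  cases j with
  | zero =>
    have hsub : Lj ⊆ {0} := by
      intro i hi
      have := ((hLj i).1 hi).1
      rw [InTree3] at this
      simp [this]
    have h1 : (Lj.card : ℝ) ≤ 1 := by exact_mod_cast Finset.card_le_card hsub
    linarith [hrpow0, h1]
  | succ j' =>
    set Sb : ℕ → ℝ := fun i => blockSum3 f m (j' + 1) i with hSb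
    set P := Lj.image (· / 3) with hP
    have hleaf : ∀ i ∈ Lj, InTree3 f n m j' (i / 3) ∧ Splits3 f n m j' (i / 3) := by
      intro i hi
      have h := ((hLj i).1 hi).1
      rw [InTree3] at h
      exact h
    obtain ⟨i0, hi0⟩ := hLne
    have hjm : j' + 1 ≤ m := (hleaf i0 hi0).2.1
    have hPmem : ∀ p ∈ P, InTree3 f n m j' p ∧ Splits3 f n m j' p := by
      intro p hp
      obtain ⟨i, hi, rfl⟩ := Finset.mem_image.1 hp
      exact hleaf i hi
    have hsetup : S17.Setup n (3 ^ (j' + 1)) Sb (· ∈ P) := by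
      constructor
      · exact hn
      · intro i; exact S17.blockSum3_nonneg f m hf0 (j' + 1) i
      · intro i hiK
        exact S17.block_mono hmono hjm (by omega)
      · intro i hiK
        exact S17.block_conv hconv hjm (by omega)
      · intro p hp
        obtain ⟨ht, hsp⟩ := hPmem p hp
        have hplt : p < 3 ^ j' := S17.inTree3_lt f n m j' p ht
        refine ⟨by have hps := pow_succ 3 j'; omega, ?_⟩
        exact hsp.2
    set T := P.card with hT
    have hPne : P.Nonempty := ⟨i0 / 3, Finset.mem_image_of_mem _ hi0⟩
    have hT1 : 1 ≤ T := Finset.card_pos.mpr hPne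
    -- card bound
    have hcard3 : Lj.card ≤ 3 * T := by
      have hsub : Lj ⊆ P.biUnion fun p => {3 * p, 3 * p + 1, 3 * p + 2} := by
        intro i hi
        rw [Finset.mem_biUnion]
        refine ⟨i / 3, Finset.mem_image_of_mem _ hi, ?_⟩
        simp only [Finset.mem_insert, Finset.mem_singleton]
        omega
      calc Lj.card ≤ (P.biUnion fun p => {3 * p, 3 * p + 1, 3 * p + 2}).card :=
          Finset.card_le_card hsub
      _ ≤ ∑ p ∈ P, ({3 * p, 3 * p + 1, 3 * p + 2} : Finset ℕ).card :=
          Finset.card_biUnion_le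
      _ ≤ ∑ p ∈ P, 3 := Finset.sum_le_sum fun p _ => by
          calc ({3 * p, 3 * p + 1, 3 * p + 2} : Finset ℕ).card
              ≤ ({3 * p + 1, 3 * p + 2} : Finset ℕ).card + 1 := Finset.card_insert_le _ _
          _ ≤ (({3 * p + 2} : Finset ℕ).card + 1) + 1 := by
              have := Finset.card_insert_le (3 * p + 1) ({3 * p + 2} : Finset ℕ)
              omega
          _ = 3 := by simp
      _ = 3 * T := by rw [Finset.sum_const, smul_eq_mul, mul_comm]
    -- mass bound
    have hchoose : ∀ p ∈ P, ∃ i, i ∈ Lj ∧ i / 3 = p := by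
      intro p hp
      obtain ⟨i, hi, hip⟩ := Finset.mem_image.1 hp
      exact ⟨i, hi, hip⟩
    set v : ℕ → ℕ := fun p => if h : ∃ i, i ∈ Lj ∧ i / 3 = p then h.choose else 0 with hv
    have hv1 : ∀ p ∈ P, v p ∈ Lj ∧ v p / 3 = p := by
      intro p hp
      have h := hchoose p hp
      simp only [hv, dif_pos h]
      exact h.choose_spec
    have hinj : ∀ x ∈ P, ∀ y ∈ P, v x = v y → x = y := by
      intro x hx y hy hxy
      have h1 := (hv1 x hx).2
      have h2 := (hv1 y hy).2
      rw [← h1, ← h2, hxy]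
    have hmass : ∑ p ∈ P, (n : ℝ) * Sb (3 * p + 2) ≤ (n : ℝ) * qj := by
      have hstep1 : ∑ p ∈ P, Sb (3 * p + 2) ≤ ∑ p ∈ P, Sb (v p) := by
        apply Finset.sum_le_sum
        intro p hp
        obtain ⟨hvL, hvp⟩ := hv1 p hp
        have h32 : 3 * p + 2 < 3 ^ (j' + 1) := (hsetup.hsplit p hp).1
        exact hsetup.smono (v p) (3 * p + 2) (by omega) h32
      have hstep2 : ∑ p ∈ P, Sb (v p) = ∑ i ∈ P.image v, Sb i := (Finset.sum_image hinj).symm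
      have hstep3 : ∑ i ∈ P.image v, Sb i ≤ ∑ i ∈ Lj, Sb i := by
        apply Finset.sum_le_sum_of_subset_of_nonneg
        · intro i hi
          obtain ⟨p, hp, rfl⟩ := Finset.mem_image.1 hi
          exact (hv1 p hp).1
        · intro i _ _
          exact hsetup.hS0 i
      have hq : qj = ∑ i ∈ Lj, Sb i := hqj
      rw [← Finset.mul_sum]
      apply mul_le_mul_of_nonneg_left _ (by positivity : (0:ℝ) ≤ (n:ℝ))
      rw [hq]
      exact le_trans hstep1 (le_trans (le_of_eq hstep2) hstep3)
    have hsum := hsetup.sumLB P (fun p hp => hp)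
    set N : ℕ := T - 1 with hN
    have hTN : T = N + 1 := by omega
    have h5 := S17.sum_pow4 N
    have hlamS : S17.lam * ∑ u ∈ Finset.range T, (u : ℝ) ^ 4 ≤ (n : ℝ) * qj :=
      le_trans hsum hmass
    have hX5 : (3 * (N : ℝ) / 11) ^ (5:ℕ) ≤ (n : ℝ) * qj := by
      have hlampos : (0:ℝ) < S17.lam := by rw [S17.lam]; norm_num
      have h1 : (3 * (N : ℝ) / 11) ^ (5:ℕ) = (243 / 161051) * (N : ℝ) ^ 5 := by ring
      have h2 : (243 / 161051 : ℝ) * (N : ℝ) ^ 5 ≤ (243 / 161051) * (5 * ∑ u ∈ Finset.range (N + 1), (u : ℝ) ^ 4) := by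
        apply mul_le_mul_of_nonneg_left h5 (by norm_num)
      have h3 : (243 / 161051 : ℝ) * (5 * ∑ u ∈ Finset.range (N + 1), (u : ℝ) ^ 4) =
          S17.lam * ∑ u ∈ Finset.range (N + 1), (u : ℝ) ^ 4 := by
        rw [S17.lam]; ring
      rw [h1, ← hTN] at *
      calc (243 / 161051 : ℝ) * (N : ℝ) ^ 5 ≤ S17.lam * ∑ u ∈ Finset.range T, (u : ℝ) ^ 4 := by
            rw [hTN]; rw [hTN] at h2 h3 ⊢ <;> linarith [h2, h3]
      _ ≤ (n : ℝ) * qj := hlamS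
    have hX0 : (0:ℝ) ≤ 3 * (N : ℝ) / 11 := by positivity
    have hXle : 3 * (N : ℝ) / 11 ≤ ((n : ℝ) * qj) ^ ((1:ℝ)/5) := by
      have heq : 3 * (N : ℝ) / 11 = ((3 * (N : ℝ) / 11) ^ (5:ℕ)) ^ ((1:ℝ)/5) := by
        rw [← Real.rpow_natCast (3 * (N : ℝ) / 11) 5, ← Real.rpow_mul hX0]
        norm_num
      rw [heq]
      exact Real.rpow_le_rpow (by positivity) hX5 (by norm_num)
    have hfin : (Lj.card : ℝ) ≤ 3 * ((N : ℝ) + 1) := by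
      have : (Lj.card : ℝ) ≤ 3 * (T : ℝ) := by exact_mod_cast hcard3
      rw [hTN] at this
      push_cast at this ⊢
      linarith
    calc (Lj.card : ℝ) ≤ 3 * ((N : ℝ) + 1) := hfin
    _ = 3 + 11 * (3 * (N : ℝ) / 11) := by ring
    _ ≤ 3 + 11 * ((n : ℝ) * qj) ^ ((1:ℝ)/5) := by linarith [hXle]
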